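/- arXiv:2109.02397 — 2 statements merged into one kernel-verified Lean document; each statement's English description precedes it below -/
import Mathlib

section
/- Let 0 < ε < 1/2 and let ψ be a C¹ real-valued function on the closed annulus Ā = {ε ≤ |x| ≤ 1} with ψ = −log 2 on |x| = ε, ψ = 0 on |x| = 1, and Dψ(x)·x/|x| > 0 on Ā (so that Φ(x) = exp(ψ(x))·x/|x| is an orientation-preserving diffeomorphism with radial directional field). Then the anisotropy energy satisfies I₁(Φ) = ∫_A (trace Φ⋆[I])(Φ(x)) dx ≥ 2π(1 − ε² + (2/3)(2ε − 1)²), i.e., Φ has energy at least that of the optimal radial transformation exp(f₁(|x|))·x/|x|, where f₁(r) = log((3r + √(9r² + 16(2−ε)(1/2−ε)))/(4(2−ε))). -/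
open Set MeasureTheory Real
noncomputable section

abbrev E2 := EuclideanSpace ℝ (Fin 2)

/-- The gradient (as a `Fin 2`-indexed vector) of a scalar function on ℝ². -/
noncomputable def gradV (f : E2 → ℝ) (x : E2) : Fin 2 → ℝ :=
  fun j => fderiv ℝ f x (EuclideanSpace.single j 1)

/-- The squared Euclidean norm of a `Fin 2`-indexed vector. -/
def sqv (v : Fin 2 → ℝ) : ℝ := v 0 ^ 2 + v 1 ^ 2

/-- The Euclidean dot product of two `Fin 2`-indexed vectors. -/
def dotv (v w : Fin 2 → ℝ) : ℝ := v 0 * w 0 + v 1 * w 1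

/-! ### Auxiliary material -/

def eE : E2 ≃ᵐ ℝ × ℝ := (MeasurableEquiv.toLp 2 (Fin 2 → ℝ)).symm.trans MeasurableEquiv.finTwoArrow

lemma eE_mp : MeasurePreserving eE volume volume :=
  (volume_preserving_finTwoArrow ℝ).comp (EuclideanSpace.volume_preserving_symm_measurableEquiv_toLp (Fin 2))

lemma eE_symm0 (p : ℝ × ℝ) : eE.symm p 0 = p.1 := rfl
lemma eE_symm1 (p : ℝ × ℝ) : eE.symm p 1 = p.2 := rfl
lemma eE_apply (x : E2) : eE x = (x 0, x 1) := rfl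

lemma norm_E2 (x : E2) : ‖x‖ = Real.sqrt (x 0 ^ 2 + x 1 ^ 2) := by
  rw [EuclideanSpace.norm_eq, Fin.sum_univ_two]
  simp [sq_abs]

lemma cont_eE_symm : Continuous (fun p : ℝ × ℝ => eE.symm p) := by
  apply (PiLp.continuous_toLp 2 (fun _ : Fin 2 => ℝ)).comp
  apply continuous_pi
  intro i
  fin_cases i
  · exact continuous_fst
  · exact continuous_snd

lemma norm_eE_symm (p : ℝ × ℝ) : ‖eE.symm p‖ = Real.sqrt (p.1 ^ 2 + p.2 ^ 2) := by
  rw [norm_E2, eE_symm0, eE_symm1]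

lemma norm_polar (r θ : ℝ) : ‖eE.symm (r * Real.cos θ, r * Real.sin θ)‖ = |r| := by
  rw [norm_eE_symm]
  have h : (r * Real.cos θ) ^ 2 + (r * Real.sin θ) ^ 2 = r ^ 2 := by
    have := Real.sin_sq_add_cos_sq θ
    nlinarith
  rw [h, Real.sqrt_sq_eq_abs]

lemma polar_ann (ε : ℝ) (hε : 0 < ε) (hε1 : ε < 1) (f : E2 → ℝ)
    (hf : ContinuousOn f {x : E2 | ε ≤ ‖x‖ ∧ ‖x‖ ≤ 1}) :
    ∫ x in {x : E2 | ε < ‖x‖ ∧ ‖x‖ < 1}, f x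
      = ∫ θ in Ioo (-π) π, ∫ r in Ioo ε 1,
          r * f (eE.symm (r * Real.cos θ, r * Real.sin θ)) := by
  set AP : Set (ℝ × ℝ) := {p | ε < Real.sqrt (p.1 ^ 2 + p.2 ^ 2)
      ∧ Real.sqrt (p.1 ^ 2 + p.2 ^ 2) < 1} with hAP
  have hAPmeas : MeasurableSet AP := by
    apply MeasurableSet.inter
    · exact measurableSet_lt measurable_const
        ((continuous_fst.pow 2 |>.add (continuous_snd.pow 2)).sqrt.measurable)
    · exact measurableSet_lt
        ((continuous_fst.pow 2 |>.add (continuous_snd.pow 2)).sqrt.measurable) measurable_const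
  have hpre : {x : E2 | ε < ‖x‖ ∧ ‖x‖ < 1} = eE ⁻¹' AP := by
    ext x
    simp only [hAP, mem_setOf_eq, mem_preimage, eE_apply, norm_E2]
  set G : ℝ × ℝ → ℝ := fun q =>
    q.2 * f (eE.symm (q.2 * Real.cos q.1, q.2 * Real.sin q.1)) with hG
  have hGcont : ContinuousOn G (Icc (-π) π ×ˢ Icc ε 1) := by
    apply ContinuousOn.mul continuous_snd.continuousOn
    apply hf.comp
    · apply Continuous.continuousOn
      apply cont_eE_symm.comp
      fun_prop
    · rintro ⟨θ, r⟩ ⟨hθ, hr⟩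
      have : |r| = r := abs_of_pos (lt_of_lt_of_le hε hr.1)
      constructor <;> rw [norm_polar, this]
      · exact hr.1
      · exact hr.2
  have hGint : IntegrableOn G (Ioo (-π) π ×ˢ Ioo ε 1) := by
    apply (hGcont.integrableOn_compact (isCompact_Icc.prod isCompact_Icc)).mono_set
    exact prod_mono Ioo_subset_Icc_self Ioo_subset_Icc_self
  calc ∫ x in {x : E2 | ε < ‖x‖ ∧ ‖x‖ < 1}, f x
      = ∫ x in eE ⁻¹' AP, (f ∘ eE.symm) (eE x) := by
        rw [hpre]
        apply setIntegral_congr_fun (eE.measurable hAPmeas)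
        intro x _
        simp
    _ = ∫ p in AP, (f ∘ eE.symm) p :=
        eE_mp.setIntegral_preimage_emb eE.measurableEmbedding _ _
    _ = ∫ p, AP.indicator (f ∘ eE.symm) p := (integral_indicator hAPmeas).symm
    _ = ∫ p in polarCoord.target, p.1 • AP.indicator (f ∘ eE.symm) (polarCoord.symm p) :=
        (integral_comp_polarCoord_symm _).symm
    _ = ∫ p in polarCoord.target,
          (Ioo ε 1 ×ˢ Ioo (-π) π).indicator
            (fun p : ℝ × ℝ => p.1 * f (eE.symm (polarCoord.symm p))) p := by
        apply setIntegral_congr_fun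
        · exact polarCoord.open_target.measurableSet
        intro p hp
        dsimp only
        rw [polarCoord_target] at hp
        have hp1 : 0 < p.1 := hp.1
        have hmem : polarCoord.symm p ∈ AP ↔ p ∈ Ioo ε 1 ×ˢ Ioo (-π) π := by
          simp only [hAP, polarCoord_symm_apply, mem_setOf_eq, mem_prod, mem_Ioo]
          have h : (p.1 * Real.cos p.2) ^ 2 + (p.1 * Real.sin p.2) ^ 2 = p.1 ^ 2 := by
            have := Real.sin_sq_add_cos_sq p.2
            nlinarith
          rw [h, Real.sqrt_sq hp1.le]
          constructor
          · rintro ⟨h1, h2⟩; exact ⟨⟨h1, h2⟩, hp.2⟩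
          · rintro ⟨⟨h1, h2⟩, _⟩; exact ⟨h1, h2⟩
        by_cases hmem2 : p ∈ Ioo ε 1 ×ˢ Ioo (-π) π
        · rw [indicator_of_mem (hmem.mpr hmem2), indicator_of_mem hmem2]
          simp [smul_eq_mul]
        · rw [indicator_of_notMem (fun hc => hmem2 (hmem.mp hc)),
            indicator_of_notMem hmem2, smul_zero]
    _ = ∫ p in polarCoord.target ∩ (Ioo ε 1 ×ˢ Ioo (-π) π),
          p.1 * f (eE.symm (polarCoord.symm p)) := setIntegral_indicator (by
            exact (measurableSet_Ioo.prod measurableSet_Ioo))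
    _ = ∫ p in (Ioo ε 1 ×ˢ Ioo (-π) π), p.1 * f (eE.symm (polarCoord.symm p)) := by
        rw [inter_eq_self_of_subset_right]
        rw [polarCoord_target]
        exact prod_mono (Ioo_subset_Ioi_self.trans (Ioi_subset_Ioi hε.le)) subset_rfl
    _ = ∫ q in Ioo (-π) π ×ˢ Ioo ε 1, G q := by
        have hswap : MeasurePreserving (Prod.swap : ℝ × ℝ → ℝ × ℝ) volume volume := by
          rw [Measure.volume_eq_prod]
          exact Measure.measurePreserving_swap
        have hkey := hswap.setIntegral_preimage_emb
          (MeasurableEquiv.prodComm (α := ℝ) (β := ℝ)).measurableEmbedding G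
          (Ioo (-π) π ×ˢ Ioo ε 1)
        rw [Set.preimage_swap_prod] at hkey
        rw [← hkey]
        apply setIntegral_congr_fun (measurableSet_Ioo.prod measurableSet_Ioo)
        intro q _
        simp only [hG, Prod.swap, polarCoord_symm_apply]
    _ = ∫ θ in Ioo (-π) π, ∫ r in Ioo ε 1,
          r * f (eE.symm (r * Real.cos θ, r * Real.sin θ)) := by
        rw [Measure.volume_eq_prod, setIntegral_prod _ (by rwa [← Measure.volume_eq_prod])]

lemma pointwise_bound (c r s q : ℝ) (hc : 0 < c) (hr : 0 < r) (hs : 0 < s)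
    (hq : s ^ 2 ≤ r ^ 2 * q) :
    (2/3) * Real.sqrt (9*r^2 + c) / r - (c/9) * (s / r^2) ≤ (r^2 * q + 1) / s := by
  set S := Real.sqrt (9*r^2 + c) with hS
  have hS0 : 0 < S := Real.sqrt_pos.mpr (by nlinarith)
  have hS2 : S ^ 2 = 9*r^2 + c := Real.sq_sqrt (by nlinarith)
  have e1 : 2/3*S/r - c/9*(s/r^2) = (6*S*r - c*s) / (9*r^2) := by field_simp; ring
  rw [e1, div_le_div_iff₀ (by positivity) hs]
  nlinarith [sq_nonneg (S*s - 3*r), hS2, hq, mul_pos hr hr]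

lemma hasDerivAt_G (c : ℝ) (hc : 0 < c) (r : ℝ) (hr : 0 < r) :
    HasDerivAt (fun t => (1/2) * (t * Real.sqrt (9*t^2 + c)
        + (c/3) * Real.log (3*t + Real.sqrt (9*t^2 + c))))
      (Real.sqrt (9*r^2 + c)) r := by
  have hpos : (0:ℝ) < 9*r^2 + c := by nlinarith
  have hS0 : 0 < Real.sqrt (9*r^2 + c) := Real.sqrt_pos.mpr hpos
  have hS2 : (Real.sqrt (9*r^2 + c)) ^ 2 = 9*r^2 + c := Real.sq_sqrt hpos.le
  have h1 : HasDerivAt (fun t : ℝ => 9*t^2 + c) (18*r) r := by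
    have := ((hasDerivAt_pow 2 r).const_mul 9).add_const c
    exact this.congr_deriv (by norm_num; ring)
  have hsq : HasDerivAt (fun t : ℝ => Real.sqrt (9*t^2 + c))
      (18*r / (2 * Real.sqrt (9*r^2+c))) r := h1.sqrt hpos.ne'
  have hlin : HasDerivAt (fun t : ℝ => 3*t + Real.sqrt (9*t^2 + c))
      (3 + 18*r / (2 * Real.sqrt (9*r^2+c))) r := by
    exact (((hasDerivAt_id' r).const_mul 3).add hsq).congr_deriv (by ring)
  have hlogarg : 0 < 3*r + Real.sqrt (9*r^2 + c) := by positivity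
  have hlog : HasDerivAt (fun t : ℝ => Real.log (3*t + Real.sqrt (9*t^2 + c)))
      ((3 + 18*r / (2 * Real.sqrt (9*r^2+c))) / (3*r + Real.sqrt (9*r^2+c))) r :=
    hlin.log hlogarg.ne'
  have hmul : HasDerivAt (fun t : ℝ => t * Real.sqrt (9*t^2 + c))
      (1 * Real.sqrt (9*r^2+c) + r * (18*r / (2 * Real.sqrt (9*r^2+c)))) r :=
    (hasDerivAt_id r).mul hsq
  have := (hmul.add (hlog.const_mul (c/3))).const_mul (1/2 : ℝ)
  refine this.congr_deriv ?_
  symm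
  set S := Real.sqrt (9*r^2 + c)
  field_simp
  linear_combination (18*r + 6*S) * hS2

lemma measure_Ioo_pi : (volume (Ioo (-π) π)).toReal = 2 * π := by
  rw [Real.volume_Ioo, ENNReal.toReal_ofReal (by linarith [Real.pi_pos])]
  ring

lemma setIntegral_theta_const (K : ℝ) : ∫ _ in Ioo (-π) π, K = 2 * π * K := by
  rw [setIntegral_const, measureReal_def, measure_Ioo_pi, smul_eq_mul]

lemma fderiv_dotv (ψ : E2 → ℝ) (x w : E2) :
    dotv (gradV ψ x) (fun i => w i) = fderiv ℝ ψ x w := by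
  have hw : w = w 0 • EuclideanSpace.single (0 : Fin 2) (1:ℝ)
      + w 1 • EuclideanSpace.single (1 : Fin 2) (1:ℝ) := by
    ext i
    fin_cases i <;> simp [EuclideanSpace.single_apply]
  conv_rhs => rw [hw]
  rw [map_add, _root_.map_smul, _root_.map_smul]
  simp [dotv, gradV, smul_eq_mul]
  ring

lemma lemA (ε : ℝ) (hε : 0 < ε) (hε2 : ε < 1/2) :
    ∫ x in {x : E2 | ε < ‖x‖ ∧ ‖x‖ < 1},
        (2/3) * Real.sqrt (9*‖x‖^2 + (16 - 40*ε + 16*ε^2)) / ‖x‖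
      = (2*π/3) * (5 - 8*ε + 5*ε^2) + (2*π*(16 - 40*ε + 16*ε^2)/9) * Real.log 2 := by
  set c : ℝ := 16 - 40*ε + 16*ε^2 with hc
  have hc0 : 0 < c := by nlinarith
  have hε1 : ε < 1 := by linarith
  rw [polar_ann ε hε hε1 _ (by
    apply ContinuousOn.div
    · apply Continuous.continuousOn
      have : Continuous fun x : E2 => 9*‖x‖^2 + c := by fun_prop
      exact continuous_const.mul this.sqrt
    · exact continuous_norm.continuousOn
    · intro x hx
      exact (lt_of_lt_of_le hε hx.1).ne')]
  have hinner : ∀ θ : ℝ, ∫ r in Ioo ε 1,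
      r * ((2/3) * Real.sqrt (9*‖eE.symm (r * Real.cos θ, r * Real.sin θ)‖^2 + c)
        / ‖eE.symm (r * Real.cos θ, r * Real.sin θ)‖)
      = (1/3) * (5 - 8*ε + 5*ε^2) + (c/9) * Real.log 2 := by
    intro θ
    have h1 : ∀ r ∈ Ioo ε 1,
        r * ((2/3) * Real.sqrt (9*‖eE.symm (r * Real.cos θ, r * Real.sin θ)‖^2 + c)
          / ‖eE.symm (r * Real.cos θ, r * Real.sin θ)‖)
        = (2/3) * Real.sqrt (9*r^2 + c) := by
      intro r hr
      have hr0 : 0 < r := lt_trans hε hr.1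
      rw [norm_polar, abs_of_pos hr0]
      field_simp
    rw [setIntegral_congr_fun measurableSet_Ioo h1]
    have : ∫ r in Ioo ε 1, (2/3) * Real.sqrt (9*r^2 + c)
        = ∫ r in ε..1, (2/3) * Real.sqrt (9*r^2 + c) := by
      rw [intervalIntegral.integral_of_le hε1.le, integral_Ioc_eq_integral_Ioo]
    rw [this]
    have hftc : ∫ r in ε..1, Real.sqrt (9*r^2 + c)
        = (1/2) * (1 * Real.sqrt (9*1^2 + c) + (c/3) * Real.log (3*1 + Real.sqrt (9*1^2 + c)))
          - (1/2) * (ε * Real.sqrt (9*ε^2 + c) + (c/3) * Real.log (3*ε + Real.sqrt (9*ε^2 + c))) := by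
      have key := intervalIntegral.integral_eq_sub_of_hasDerivAt (a := ε) (b := 1)
        (f := fun t => (1/2) * (t * Real.sqrt (9*t^2 + c)
          + (c/3) * Real.log (3*t + Real.sqrt (9*t^2 + c))))
        (f' := fun r => Real.sqrt (9*r^2 + c))
        (by
          intro r hr
          rw [uIcc_of_le hε1.le] at hr
          exact hasDerivAt_G c hc0 r (lt_of_lt_of_le hε hr.1))
        (by
          apply ContinuousOn.intervalIntegrable
          apply Continuous.continuousOn
          have : Continuous fun r : ℝ => 9*r^2 + c := by fun_prop
          exact this.sqrt)
      simpa using key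
    rw [intervalIntegral.integral_const_mul, hftc]
    have hs1 : Real.sqrt (9*1^2 + c) = 5 - 4*ε := by
      have h : 9*(1:ℝ)^2 + c = (5 - 4*ε)^2 := by rw [hc]; ring
      rw [h, Real.sqrt_sq (by linarith)]
    have hs2 : Real.sqrt (9*ε^2 + c) = 4 - 5*ε := by
      have h : 9*ε^2 + c = (4 - 5*ε)^2 := by rw [hc]; ring
      rw [h, Real.sqrt_sq (by linarith)]
    rw [hs1, hs2]
    have hl : Real.log (3*1 + (5 - 4*ε)) - Real.log (3*ε + (4 - 5*ε)) = Real.log 2 := by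
      have h48 : (3*1 + (5 - 4*ε)) = 2 * (3*ε + (4 - 5*ε)) := by ring
      rw [h48, Real.log_mul two_ne_zero (by linarith)]
      ring
    linear_combination (c/9) * hl
  rw [setIntegral_congr_fun measurableSet_Ioo (fun θ _ => hinner θ),
    setIntegral_theta_const]
  ring

lemma lemB (ε : ℝ) (hε : 0 < ε) (hε1 : ε < 1) (ψ : E2 → ℝ)
    (hdψ : ∀ x ∈ {x : E2 | ε ≤ ‖x‖ ∧ ‖x‖ ≤ 1}, DifferentiableAt ℝ ψ x)
    (hgc : ContinuousOn (gradV ψ) {x : E2 | ε ≤ ‖x‖ ∧ ‖x‖ ≤ 1})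
    (hin : ∀ x : E2, ‖x‖ = ε → ψ x = -Real.log 2)
    (hout : ∀ x : E2, ‖x‖ = 1 → ψ x = 0) :
    ∫ x in {x : E2 | ε < ‖x‖ ∧ ‖x‖ < 1},
        dotv (gradV ψ x) (fun i => x i) / ‖x‖^2 = 2 * π * Real.log 2 := by
  rw [polar_ann ε hε hε1 _ (by
    apply ContinuousOn.div
    · apply ContinuousOn.add
      · exact (((continuous_apply (0 : Fin 2)).comp_continuousOn hgc).mul
          (PiLp.continuous_apply 2 (fun _ : Fin 2 => ℝ) (0 : Fin 2)).continuousOn)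
      · exact (((continuous_apply (1 : Fin 2)).comp_continuousOn hgc).mul
          (PiLp.continuous_apply 2 (fun _ : Fin 2 => ℝ) (1 : Fin 2)).continuousOn)
    · exact (continuous_norm.pow 2).continuousOn
    · intro x hx
      have : 0 < ‖x‖ := lt_of_lt_of_le hε hx.1
      positivity)]
  have hinner : ∀ θ ∈ Ioo (-π) π, (∫ r in Ioo ε 1,
      r * (dotv (gradV ψ (eE.symm (r * Real.cos θ, r * Real.sin θ)))
            (fun i => eE.symm (r * Real.cos θ, r * Real.sin θ) i)
          / ‖eE.symm (r * Real.cos θ, r * Real.sin θ)‖^2))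
      = Real.log 2 := by
    intro θ _
    set u : E2 := eE.symm (Real.cos θ, Real.sin θ) with hu
    have hnu : ‖u‖ = 1 := by
      have := norm_polar 1 θ
      simpa using this
    have hu0 : u 0 = Real.cos θ := by rw [hu, eE_symm0]
    have hu1 : u 1 = Real.sin θ := by rw [hu, eE_symm1]
    have hru : ∀ r : ℝ, eE.symm (r * Real.cos θ, r * Real.sin θ) = r • u := by
      intro r
      apply eE.injective
      rw [MeasurableEquiv.apply_symm_apply, eE_apply]
      have h0 : (r • u) 0 = r * Real.cos θ := by
        rw [PiLp.smul_apply, hu0, smul_eq_mul]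
      have h1 : (r • u) 1 = r * Real.sin θ := by
        rw [PiLp.smul_apply, hu1, smul_eq_mul]
      rw [h0, h1]
    have hnru : ∀ r : ℝ, 0 ≤ r → ‖(r • u : E2)‖ = r := by
      intro r hr
      rw [norm_smul, hnu, Real.norm_eq_abs, abs_of_nonneg hr, mul_one]
    have hptw : ∀ r ∈ Ioo ε 1,
        r * (dotv (gradV ψ (eE.symm (r * Real.cos θ, r * Real.sin θ)))
            (fun i => eE.symm (r * Real.cos θ, r * Real.sin θ) i)
          / ‖eE.symm (r * Real.cos θ, r * Real.sin θ)‖^2)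
        = fderiv ℝ ψ (r • u) u := by
      intro r hr
      have hr0 : 0 < r := lt_trans hε hr.1
      rw [hru r, fderiv_dotv, hnru r hr0.le]
      rw [_root_.map_smul]
      field_simp
      ring
    rw [setIntegral_congr_fun measurableSet_Ioo hptw]
    have hIoc : ∫ r in Ioo ε 1, fderiv ℝ ψ (r • u) u
        = ∫ r in ε..1, fderiv ℝ ψ (r • u) u := by
      rw [intervalIntegral.integral_of_le hε1.le, integral_Ioc_eq_integral_Ioo]
    rw [hIoc]
    have hmem : ∀ r : ℝ, r ∈ Icc ε 1 → (r • u : E2) ∈ {x : E2 | ε ≤ ‖x‖ ∧ ‖x‖ ≤ 1} := by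
      intro r hr
      have h0 : (0:ℝ) ≤ r := le_trans hε.le hr.1
      rw [mem_setOf_eq, hnru r h0]
      exact ⟨hr.1, hr.2⟩
    have hftc : ∫ r in ε..1, fderiv ℝ ψ (r • u) u = ψ ((1:ℝ) • u) - ψ (ε • u) := by
      have key := intervalIntegral.integral_eq_sub_of_hasDerivAt (a := ε) (b := 1)
        (f := fun t : ℝ => ψ (t • u)) (f' := fun r : ℝ => fderiv ℝ ψ (r • u) u)
        ?_ ?_
      · simpa using key
      · intro r hr
        rw [uIcc_of_le hε1.le] at hr
        have hd := (hdψ _ (hmem r hr)).hasFDerivAt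
        have hline : HasDerivAt (fun t : ℝ => t • u) u r := by
          simpa using (hasDerivAt_id r).smul_const u
        exact hd.comp_hasDerivAt r hline
      · apply ContinuousOn.intervalIntegrable
        rw [uIcc_of_le hε1.le]
        have : ContinuousOn (fun r : ℝ => dotv (gradV ψ (r • u)) (fun i => u i)) (Icc ε 1) := by
          have hcs : ContinuousOn (fun r : ℝ => (r • u : E2)) (Icc ε 1) :=
            (continuous_id.smul continuous_const).continuousOn
          have hg := hgc.comp hcs hmem
          exact (((continuous_apply (0 : Fin 2)).comp_continuousOn hg).mul
            continuousOn_const).add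
            (((continuous_apply (1 : Fin 2)).comp_continuousOn hg).mul continuousOn_const)
        apply this.congr
        intro r _
        exact (fderiv_dotv ψ (r • u) u).symm
    rw [hftc, one_smul, hout u hnu, hin (ε • u) (hnru ε hε.le)]
    ring
  rw [setIntegral_congr_fun measurableSet_Ioo hinner, setIntegral_theta_const]

/-- let `ψ` be C¹ on the closed annulus `{ε ≤ |x| ≤ 1}` with
`ψ = -log 2` on `{|x| = ε}`, `ψ = 0` on `{|x| = 1}` and `Dψ·x/|x| > 0`, and let
`Φ(x) = exp(ψ(x))·x/|x|`.  Then the anisotropy energy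
`I₁(Φ) = ∫_A trace Φ⋆[I](Φ(x)) dx = ∫_A (|x|²|Dψ|² + 1)/(Dψ·x) dx` is at least
`2π(1 - ε² + (2/3)(2ε - 1)²)`, the energy of the optimal radial transformation. -/
theorem statement18 (ε : ℝ) (hε : 0 < ε) (hε2 : ε < 1/2)
    (ψ : E2 → ℝ)
    (hdψ : ∀ x ∈ {x : E2 | ε ≤ ‖x‖ ∧ ‖x‖ ≤ 1}, DifferentiableAt ℝ ψ x)
    (hgc : ContinuousOn (gradV ψ) {x : E2 | ε ≤ ‖x‖ ∧ ‖x‖ ≤ 1})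
    (hin : ∀ x : E2, ‖x‖ = ε → ψ x = -Real.log 2)
    (hout : ∀ x : E2, ‖x‖ = 1 → ψ x = 0)
    (hpos : ∀ x ∈ {x : E2 | ε ≤ ‖x‖ ∧ ‖x‖ ≤ 1},
      0 < dotv (gradV ψ x) (fun i => x i)) :
    2 * π * (1 - ε^2 + (2/3) * (2*ε - 1)^2) ≤
      ∫ x in {x : E2 | ε < ‖x‖ ∧ ‖x‖ < 1},
        (‖x‖^2 * sqv (gradV ψ x) + 1) / dotv (gradV ψ x) (fun i => x i) := by
  have hε1 : ε < 1 := by linarith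
  set c : ℝ := 16 - 40*ε + 16*ε^2 with hc
  have hc0 : 0 < c := by nlinarith
  set C : Set E2 := {x : E2 | ε ≤ ‖x‖ ∧ ‖x‖ ≤ 1} with hCdef
  set A : Set E2 := {x : E2 | ε < ‖x‖ ∧ ‖x‖ < 1} with hAdef
  have hsub : A ⊆ C := fun x hx => ⟨hx.1.le, hx.2.le⟩
  have hCcomp : IsCompact C := by
    have h1 : C = Metric.closedBall (0:E2) 1 ∩ {x : E2 | ε ≤ ‖x‖} := by
      ext x
      simp only [hCdef, mem_setOf_eq, mem_inter_iff, Metric.mem_closedBall,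
        dist_zero_right]
      tauto
    rw [h1]
    exact (isCompact_closedBall 0 1).inter_right (isClosed_le continuous_const continuous_norm)
  have hAopen : IsOpen A := by
    have h1 : A = {x : E2 | ε < ‖x‖} ∩ {x : E2 | ‖x‖ < 1} := rfl
    rw [h1]
    exact (isOpen_lt continuous_const continuous_norm).inter
      (isOpen_lt continuous_norm continuous_const)
  have hAmeas : MeasurableSet A := hAopen.measurableSet
  -- continuity facts
  have hnorm_pos : ∀ x ∈ C, (0:ℝ) < ‖x‖ := fun x hx => lt_of_lt_of_le hε hx.1
  have hdotc : ContinuousOn (fun x : E2 => dotv (gradV ψ x) (fun i => x i)) C := by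
    exact (((continuous_apply (0 : Fin 2)).comp_continuousOn hgc).mul
      (PiLp.continuous_apply 2 (fun _ : Fin 2 => ℝ) (0 : Fin 2)).continuousOn).add
      (((continuous_apply (1 : Fin 2)).comp_continuousOn hgc).mul
      (PiLp.continuous_apply 2 (fun _ : Fin 2 => ℝ) (1 : Fin 2)).continuousOn)
  have hsqvc : ContinuousOn (fun x : E2 => sqv (gradV ψ x)) C := by
    exact (((continuous_apply (0 : Fin 2)).comp_continuousOn hgc).pow 2).add
      (((continuous_apply (1 : Fin 2)).comp_continuousOn hgc).pow 2)
  have hFcont : ContinuousOn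
      (fun x : E2 => (‖x‖^2 * sqv (gradV ψ x) + 1) / dotv (gradV ψ x) (fun i => x i)) C := by
    apply ContinuousOn.div
    · exact (((continuous_norm.pow 2).continuousOn.mul hsqvc).add continuousOn_const)
    · exact hdotc
    · intro x hx
      exact (hpos x hx).ne'
  have hf1cont : ContinuousOn
      (fun x : E2 => (2/3) * Real.sqrt (9*‖x‖^2 + c) / ‖x‖) C := by
    apply ContinuousOn.div
    · apply Continuous.continuousOn
      have : Continuous fun x : E2 => 9*‖x‖^2 + c := by fun_prop
      exact continuous_const.mul this.sqrt
    · exact continuous_norm.continuousOn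
    · intro x hx
      exact (hnorm_pos x hx).ne'
  have hf2cont : ContinuousOn
      (fun x : E2 => dotv (gradV ψ x) (fun i => x i) / ‖x‖^2) C := by
    apply ContinuousOn.div hdotc (continuous_norm.pow 2).continuousOn
    intro x hx
    have := hnorm_pos x hx
    exact pow_ne_zero _ this.ne'
  have hlbcont : ContinuousOn
      (fun x : E2 => (2/3) * Real.sqrt (9*‖x‖^2 + c) / ‖x‖
        - (c/9) * (dotv (gradV ψ x) (fun i => x i) / ‖x‖^2)) C :=
    hf1cont.sub (continuousOn_const.mul hf2cont)
  -- integrability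
  have hFint : IntegrableOn
      (fun x : E2 => (‖x‖^2 * sqv (gradV ψ x) + 1) / dotv (gradV ψ x) (fun i => x i)) A :=
    (hFcont.integrableOn_compact hCcomp).mono_set hsub
  have hf1int : IntegrableOn
      (fun x : E2 => (2/3) * Real.sqrt (9*‖x‖^2 + c) / ‖x‖) A :=
    (hf1cont.integrableOn_compact hCcomp).mono_set hsub
  have hf2int : IntegrableOn
      (fun x : E2 => dotv (gradV ψ x) (fun i => x i) / ‖x‖^2) A :=
    (hf2cont.integrableOn_compact hCcomp).mono_set hsub
  have hlbint : IntegrableOn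
      (fun x : E2 => (2/3) * Real.sqrt (9*‖x‖^2 + c) / ‖x‖
        - (c/9) * (dotv (gradV ψ x) (fun i => x i) / ‖x‖^2)) A :=
    (hlbcont.integrableOn_compact hCcomp).mono_set hsub
  -- pointwise bound
  have hle : ∀ x ∈ A,
      (2/3) * Real.sqrt (9*‖x‖^2 + c) / ‖x‖
        - (c/9) * (dotv (gradV ψ x) (fun i => x i) / ‖x‖^2)
      ≤ (‖x‖^2 * sqv (gradV ψ x) + 1) / dotv (gradV ψ x) (fun i => x i) := by
    intro x hx
    have hxC : x ∈ C := hsub hx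
    have hr : 0 < ‖x‖ := hnorm_pos x hxC
    have hs : 0 < dotv (gradV ψ x) (fun i => x i) := hpos x hxC
    have hnx : ‖x‖^2 = x 0 ^ 2 + x 1 ^ 2 := by
      rw [norm_E2, Real.sq_sqrt (by positivity)]
    have hq : (dotv (gradV ψ x) (fun i => x i)) ^ 2 ≤ ‖x‖^2 * sqv (gradV ψ x) := by
      rw [hnx]
      simp only [dotv, sqv]
      nlinarith [sq_nonneg (gradV ψ x 0 * x 1 - gradV ψ x 1 * x 0)]
    exact pointwise_bound c ‖x‖ (dotv (gradV ψ x) (fun i => x i)) (sqv (gradV ψ x))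
      hc0 hr hs hq
  -- assemble
  have hmono := setIntegral_mono_on hlbint hFint hAmeas hle
  have hsplit : ∫ x in A, ((2/3) * Real.sqrt (9*‖x‖^2 + c) / ‖x‖
        - (c/9) * (dotv (gradV ψ x) (fun i => x i) / ‖x‖^2))
      = (∫ x in A, (2/3) * Real.sqrt (9*‖x‖^2 + c) / ‖x‖)
        - (c/9) * ∫ x in A, dotv (gradV ψ x) (fun i => x i) / ‖x‖^2 := by
    rw [integral_sub hf1int (hf2int.const_mul (c/9)), integral_const_mul]
  have hA := lemA ε hε hε2
  have hB := lemB ε hε hε1 ψ hdψ hgc hin hout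
  rw [hsplit, hA, hB] at hmono
  calc 2 * π * (1 - ε^2 + (2/3) * (2*ε - 1)^2)
      = (2*π/3) * (5 - 8*ε + 5*ε^2) + (2*π*c/9) * Real.log 2
        - (c/9) * (2 * π * Real.log 2) := by rw [hc]; ring
    _ ≤ _ := hmono
end
end

section
/- Let 0 < ε < 1/2, 1 ≤ p < ∞, and let f ∈ C^{2,α}([ε,1]) with f′ > 0, f(ε) = −log 2, f(1) = 0. Set ψ(x) = f(|x|) and θ(x) = arg(x) on the annulus {ε < |x| < 1}. Then the pair (ψ, θ) satisfies, in the classical sense, the divergence-form Euler–Lagrange equation div( Q^p · ( 2Dθ/(|Dψ|² + |Dθ|²) − JDψ/det(Dψ,Dθ) ) ) = 0 in the annulus, where Q = (|Dψ|² + |Dθ|²)/det(Dψ,Dθ), together with the boundary condition ( Q·JDψ − 2Dθ )·x/|x| = 0 on the circle |x| = ε. -/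
open Set MeasureTheory Real
noncomputable section

lemma coord_sq_sum (y : E2) : y 0 ^ 2 + y 1 ^ 2 = ‖y‖ ^ 2 := by
  rw [EuclideanSpace.norm_eq, Real.sq_sqrt (by positivity)]
  simp [Fin.sum_univ_two, Real.norm_eq_abs, sq_abs]

lemma norm_hasFDerivAt (x : E2) (hx : x ≠ 0) :
    HasFDerivAt (fun y : E2 => ‖y‖)
      ((1 / (2 * ‖x‖)) • (2 : ℝ) • (innerSL ℝ x)) x := by
  have h1 : HasFDerivAt (fun y : E2 => ‖y‖ ^ 2) ((2 : ℝ) • (innerSL ℝ x)) x := by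
    simpa [← Nat.cast_smul_eq_nsmul ℝ] using (hasFDerivAt_id x).norm_sq
  have hsq : (‖x‖ : ℝ) ^ 2 ≠ 0 := pow_ne_zero 2 (norm_ne_zero_iff.2 hx)
  have h2 := (Real.hasDerivAt_sqrt hsq).comp_hasFDerivAt x h1
  simp only [Function.comp_def, Real.sqrt_sq (norm_nonneg _)] at h2
  exact h2

lemma coord_hasFDerivAt (x : E2) (i : Fin 2) :
    HasFDerivAt (fun y : E2 => y i) (EuclideanSpace.proj i : E2 →L[ℝ] ℝ) x :=
  (EuclideanSpace.proj i : E2 →L[ℝ] ℝ).hasFDerivAt.congr_of_eventuallyEq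
    (Filter.Eventually.of_forall fun _ => rfl)

/-- for `0 < ε < 1/2`, `1 ≤ p < ∞` and `f ∈ C^{2,α}([ε,1])` with `f' > 0`,
`f(ε) = -log 2`, `f(1) = 0`, the radial pair `ψ(x) = f(|x|)`, `θ(x) = arg(x)` (with
gradients `Dψ(x) = f'(|x|)x/|x|` and `Dθ(x) = (1/|x|)Jx/|x| = (-x₂, x₁)/|x|²`) satisfies,
in the classical sense, the divergence-form Euler--Lagrange equation
`div(Q^p(2Dθ/(|Dψ|² + |Dθ|²) - JDψ/det(Dψ,Dθ))) = 0` in the annulus `{ε < |x| < 1}`,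
where `Q = (|Dψ|² + |Dθ|²)/det(Dψ,Dθ)`, together with the boundary condition
`(Q·JDψ - 2Dθ)·x/|x| = 0` on `{|x| = ε}`. -/
theorem statement19 (ε p : ℝ) (hε : 0 < ε) (hε2 : ε < 1/2) (hp : 1 ≤ p)
    (f f' f'' : ℝ → ℝ)
    (hf : ∀ r ∈ Set.Icc ε 1, HasDerivAt f (f' r) r)
    (hf' : ∀ r ∈ Set.Icc ε 1, HasDerivAt f' (f'' r) r)
    (hholder : ∃ C α : NNReal, 0 < α ∧ α ≤ 1 ∧ HolderOnWith C α f'' (Set.Icc ε 1))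
    (hf'pos : ∀ r ∈ Set.Icc ε 1, 0 < f' r)
    (hfε : f ε = -Real.log 2) (hf1 : f 1 = 0)
    (Dψ Dθ : E2 → Fin 2 → ℝ)
    (hDψ : ∀ x : E2, Dψ x = fun i => f' ‖x‖ * (x i / ‖x‖))
    (hDθ : ∀ x : E2, Dθ x = fun i => ![-(x 1), x 0] i / ‖x‖^2)
    (detf Qf : E2 → ℝ)
    (hdetf : ∀ x, detf x = Dψ x 0 * Dθ x 1 - Dψ x 1 * Dθ x 0)
    (hQf : ∀ x, Qf x = (sqv (Dψ x) + sqv (Dθ x)) / detf x)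
    (W : E2 → Fin 2 → ℝ)
    (hW : ∀ x, W x = fun i =>
      (Qf x) ^ p * ((2 / (sqv (Dψ x) + sqv (Dθ x))) * Dθ x i -
        (1 / detf x) * (![-(Dψ x 1), Dψ x 0] i))) :
    (∀ x : E2, ε < ‖x‖ → ‖x‖ < 1 →
      (∑ i, fderiv ℝ (fun y => W y i) x (EuclideanSpace.single i 1)) = 0) ∧
    (∀ x : E2, ‖x‖ = ε →
      (∑ i, (Qf x * (![-(Dψ x 1), Dψ x 0] i) - 2 * Dθ x i) * (x i / ‖x‖)) = 0) := by
  constructor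
  · intro x hx1 hx2
    -- the radial profile of the vector field (up to the rotation `Jx`)
    set h : ℝ → ℝ := fun t =>
      ((f' t ^ 2 + 1 / t ^ 2) / (f' t / t)) ^ p *
        (2 / ((f' t ^ 2 + 1 / t ^ 2) * t ^ 2) - 1) with hhdef
    -- key pointwise identity on the annulus
    have key : ∀ y : E2, ε < ‖y‖ → ‖y‖ < 1 →
        W y 0 = h ‖y‖ * (-(y 1)) ∧ W y 1 = h ‖y‖ * (y 0) := by
      intro y hy1 hy2
      have ht0 : 0 < ‖y‖ := hε.trans hy1
      have htne : (‖y‖ : ℝ) ≠ 0 := ht0.ne'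
      have hft : 0 < f' ‖y‖ := hf'pos _ ⟨hy1.le, hy2.le⟩
      have hftne : f' ‖y‖ ≠ 0 := hft.ne'
      have hsq : y 0 ^ 2 + y 1 ^ 2 = ‖y‖ ^ 2 := coord_sq_sum y
      have hSpos : 0 < f' ‖y‖ ^ 2 + 1 / ‖y‖ ^ 2 := by positivity
      have hSne : f' ‖y‖ ^ 2 + 1 / ‖y‖ ^ 2 ≠ 0 := hSpos.ne'
      have hψ : sqv (Dψ y) = f' ‖y‖ ^ 2 := by
        rw [hDψ]
        show (f' ‖y‖ * (y 0 / ‖y‖)) ^ 2 + (f' ‖y‖ * (y 1 / ‖y‖)) ^ 2 = f' ‖y‖ ^ 2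
        calc (f' ‖y‖ * (y 0 / ‖y‖)) ^ 2 + (f' ‖y‖ * (y 1 / ‖y‖)) ^ 2
            = f' ‖y‖ ^ 2 * ((y 0 ^ 2 + y 1 ^ 2) / ‖y‖ ^ 2) := by ring
          _ = f' ‖y‖ ^ 2 * (‖y‖ ^ 2 / ‖y‖ ^ 2) := by rw [hsq]
          _ = f' ‖y‖ ^ 2 := by rw [div_self (pow_ne_zero 2 htne), mul_one]
      have hθ : sqv (Dθ y) = 1 / ‖y‖ ^ 2 := by
        rw [hDθ]
        show (-(y 1) / ‖y‖ ^ 2) ^ 2 + (y 0 / ‖y‖ ^ 2) ^ 2 = 1 / ‖y‖ ^ 2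
        calc (-(y 1) / ‖y‖ ^ 2) ^ 2 + (y 0 / ‖y‖ ^ 2) ^ 2
            = (y 0 ^ 2 + y 1 ^ 2) / ‖y‖ ^ 4 := by ring
          _ = ‖y‖ ^ 2 / ‖y‖ ^ 4 := by rw [hsq]
          _ = 1 / ‖y‖ ^ 2 := by
              field_simp
      have hS : sqv (Dψ y) + sqv (Dθ y) = f' ‖y‖ ^ 2 + 1 / ‖y‖ ^ 2 := by rw [hψ, hθ]
      have hdet : detf y = f' ‖y‖ / ‖y‖ := by
        rw [hdetf, hDψ, hDθ]
        show f' ‖y‖ * (y 0 / ‖y‖) * (y 0 / ‖y‖ ^ 2) -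
            f' ‖y‖ * (y 1 / ‖y‖) * (-(y 1) / ‖y‖ ^ 2) = f' ‖y‖ / ‖y‖
        calc f' ‖y‖ * (y 0 / ‖y‖) * (y 0 / ‖y‖ ^ 2) -
              f' ‖y‖ * (y 1 / ‖y‖) * (-(y 1) / ‖y‖ ^ 2)
            = (f' ‖y‖ / ‖y‖ ^ 3) * (y 0 ^ 2 + y 1 ^ 2) := by ring
          _ = (f' ‖y‖ / ‖y‖ ^ 3) * ‖y‖ ^ 2 := by rw [hsq]
          _ = f' ‖y‖ / ‖y‖ := by
              field_simp
      have hQ : Qf y = (f' ‖y‖ ^ 2 + 1 / ‖y‖ ^ 2) / (f' ‖y‖ / ‖y‖) := by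
        rw [hQf, hS, hdet]
      constructor
      · rw [hW]
        show Qf y ^ p * (2 / (sqv (Dψ y) + sqv (Dθ y)) * Dθ y 0 -
            1 / detf y * (-(Dψ y 1))) = h ‖y‖ * (-(y 1))
        rw [hQ, hS, hdet, hDψ, hDθ, hhdef]
        show ((f' ‖y‖ ^ 2 + 1 / ‖y‖ ^ 2) / (f' ‖y‖ / ‖y‖)) ^ p *
            (2 / (f' ‖y‖ ^ 2 + 1 / ‖y‖ ^ 2) * (-(y 1) / ‖y‖ ^ 2) -
              1 / (f' ‖y‖ / ‖y‖) * (-(f' ‖y‖ * (y 1 / ‖y‖)))) =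
          ((f' ‖y‖ ^ 2 + 1 / ‖y‖ ^ 2) / (f' ‖y‖ / ‖y‖)) ^ p *
            (2 / ((f' ‖y‖ ^ 2 + 1 / ‖y‖ ^ 2) * ‖y‖ ^ 2) - 1) * (-(y 1))
        rw [mul_assoc]
        congr 1
        field_simp
        ring
      · rw [hW]
        show Qf y ^ p * (2 / (sqv (Dψ y) + sqv (Dθ y)) * Dθ y 1 -
            1 / detf y * (Dψ y 0)) = h ‖y‖ * (y 0)
        rw [hQ, hS, hdet, hDψ, hDθ, hhdef]
        show ((f' ‖y‖ ^ 2 + 1 / ‖y‖ ^ 2) / (f' ‖y‖ / ‖y‖)) ^ p *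
            (2 / (f' ‖y‖ ^ 2 + 1 / ‖y‖ ^ 2) * (y 0 / ‖y‖ ^ 2) -
              1 / (f' ‖y‖ / ‖y‖) * (f' ‖y‖ * (y 0 / ‖y‖))) =
          ((f' ‖y‖ ^ 2 + 1 / ‖y‖ ^ 2) / (f' ‖y‖ / ‖y‖)) ^ p *
            (2 / ((f' ‖y‖ ^ 2 + 1 / ‖y‖ ^ 2) * ‖y‖ ^ 2) - 1) * (y 0)
        rw [mul_assoc]
        congr 1
        field_simp
    -- differentiability of `h` at `r = ‖x‖`
    have hr0 : 0 < ‖x‖ := hε.trans hx1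
    have hrne : (‖x‖ : ℝ) ≠ 0 := hr0.ne'
    have hxmem : ‖x‖ ∈ Set.Icc ε 1 := ⟨hx1.le, hx2.le⟩
    have hfr : 0 < f' ‖x‖ := hf'pos _ hxmem
    have hSpos : 0 < f' ‖x‖ ^ 2 + 1 / ‖x‖ ^ 2 := by positivity
    have hdf' : DifferentiableAt ℝ f' ‖x‖ := (hf' _ hxmem).differentiableAt
    have hdS : DifferentiableAt ℝ (fun t => f' t ^ 2 + 1 / t ^ 2) ‖x‖ :=
      (hdf'.pow 2).add ((differentiableAt_const 1).div (differentiableAt_pow 2)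
        (pow_ne_zero 2 hrne))
    have hdQ : DifferentiableAt ℝ (fun t => (f' t ^ 2 + 1 / t ^ 2) / (f' t / t)) ‖x‖ :=
      hdS.div (hdf'.div differentiableAt_id hrne) (div_ne_zero hfr.ne' hrne)
    have hdh : DifferentiableAt ℝ h ‖x‖ := by
      rw [hhdef]
      exact (hdQ.rpow_const (Or.inr hp)).mul
        (((differentiableAt_const 2).div (hdS.mul (differentiableAt_pow 2))
          (mul_ne_zero hSpos.ne' (pow_ne_zero 2 hrne))).sub (differentiableAt_const 1))
    have hd : HasDerivAt h (deriv h ‖x‖) ‖x‖ := hdh.hasDerivAt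
    have hxne : x ≠ 0 := norm_pos_iff.1 hr0
    have hn := norm_hasFDerivAt x hxne
    have hg : HasFDerivAt (fun y : E2 => h ‖y‖)
        (deriv h ‖x‖ • ((1 / (2 * ‖x‖)) • (2 : ℝ) • (innerSL ℝ x))) x :=
      hd.comp_hasFDerivAt x hn
    have H0 : HasFDerivAt (fun y : E2 => h ‖y‖ * (-(y 1)))
        ((h ‖x‖) • (-(EuclideanSpace.proj (1 : Fin 2) : E2 →L[ℝ] ℝ)) +
          (-(x 1)) • (deriv h ‖x‖ • ((1 / (2 * ‖x‖)) • (2 : ℝ) • (innerSL ℝ x)))) x :=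
      hg.mul (coord_hasFDerivAt x 1).neg
    have H1 : HasFDerivAt (fun y : E2 => h ‖y‖ * (y 0))
        ((h ‖x‖) • (EuclideanSpace.proj (0 : Fin 2) : E2 →L[ℝ] ℝ) +
          (x 0) • (deriv h ‖x‖ • ((1 / (2 * ‖x‖)) • (2 : ℝ) • (innerSL ℝ x)))) x :=
      hg.mul (coord_hasFDerivAt x 0)
    have hU : {y : E2 | ε < ‖y‖ ∧ ‖y‖ < 1} ∈ nhds x :=
      IsOpen.mem_nhds (by
        have : {y : E2 | ε < ‖y‖ ∧ ‖y‖ < 1} = (fun y : E2 => ‖y‖) ⁻¹' Set.Ioo ε 1 := rfl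
        rw [this]; exact isOpen_Ioo.preimage continuous_norm) ⟨hx1, hx2⟩
    have hE0 : fderiv ℝ (fun y => W y 0) x = fderiv ℝ (fun y : E2 => h ‖y‖ * (-(y 1))) x := by
      apply Filter.EventuallyEq.fderiv_eq
      filter_upwards [hU] with y hy
      exact (key y hy.1 hy.2).1
    have hE1 : fderiv ℝ (fun y => W y 1) x = fderiv ℝ (fun y : E2 => h ‖y‖ * (y 0)) x := by
      apply Filter.EventuallyEq.fderiv_eq
      filter_upwards [hU] with y hy
      exact (key y hy.1 hy.2).2
    rw [Fin.sum_univ_two, hE0, hE1, H0.fderiv, H1.fderiv]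
    have e01 : (EuclideanSpace.proj (1 : Fin 2) : E2 →L[ℝ] ℝ)
        (EuclideanSpace.single (0 : Fin 2) (1 : ℝ)) = 0 := by
      simp [EuclideanSpace.single_apply]
    have e10 : (EuclideanSpace.proj (0 : Fin 2) : E2 →L[ℝ] ℝ)
        (EuclideanSpace.single (1 : Fin 2) (1 : ℝ)) = 0 := by
      simp [EuclideanSpace.single_apply]
    have hi0 : (inner ℝ x (EuclideanSpace.single (0 : Fin 2) (1 : ℝ)) : ℝ) = x 0 := by
      rw [EuclideanSpace.inner_single_right]; simp
    have hi1 : (inner ℝ x (EuclideanSpace.single (1 : Fin 2) (1 : ℝ)) : ℝ) = x 1 := by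
      rw [EuclideanSpace.inner_single_right]; simp
    simp only [ContinuousLinearMap.add_apply, ContinuousLinearMap.coe_smul',
      Pi.smul_apply, ContinuousLinearMap.neg_apply, smul_eq_mul, innerSL_apply_apply,
      e01, e10, hi0, hi1]
    ring
  · intro x hx
    rw [Fin.sum_univ_two]
    simp only [hDψ, hDθ, Matrix.cons_val_zero, Matrix.cons_val_one, Matrix.head_cons]
    ring
end
end
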